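/- If g : [0,1] → [0,1]² is any function whose restriction to I coincides with Cantor's bijection f, then g is discontinuous at every rational number of [0,1]. -/

import Mathlib

open Filter Finset MeasureTheory

/-- `qden a n` is the denominator `q_n` of the continued fraction with partial
quotients `a_1 = a 0, a_2 = a 1, …` (0-indexed sequence `a`), defined by
`q_0 = 1`, `q_1 = a_1`, `q_n = a_n q_{n-1} + q_{n-2}`. -/
def qden (a : ℕ → ℕ+) : ℕ → ℕ
  | 0 => 1
  | 1 => a 0
  | (n+2) => (a (n+1) : ℕ) * qden a (n+1) + qden a n

/-- `pnum a n` is the numerator `p_n`, defined by `p_0 = 0`, `p_1 = 1`,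
`p_n = a_n p_{n-1} + p_{n-2}`. -/
def pnum (a : ℕ → ℕ+) : ℕ → ℕ
  | 0 => 0
  | 1 => 1
  | (n+2) => (a (n+1) : ℕ) * pnum a (n+1) + pnum a n

/-- The value `[a_1, a_2, …]` of the infinite continued fraction with partial quotients
`a_1 = a 0, a_2 = a 1, …`, i.e. the limit of the convergents `p_n / q_n` (which always
exists). -/
noncomputable def cfVal (a : ℕ → ℕ+) : ℝ :=
  limUnder atTop (fun n => (pnum a n : ℝ) / (qden a n : ℝ))

/-- The set `I` of irrational numbers of `[0,1]`. -/
def Iirr : Set ℝ := {x | x ∈ Set.Icc (0:ℝ) 1 ∧ Irrational x}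

/-- The (unique) sequence of partial quotients of `x`, when `x` has a continued
fraction expansion. -/
noncomputable def coeff (x : ℝ) : ℕ → ℕ+ := by
  classical
  exact if h : ∃ a : ℕ → ℕ+, cfVal a = x then h.choose else fun _ => 1

/-- First component of Cantor's bijection: `f₁([a_1,a_2,…]) = [a_1,a_3,a_5,…]`. -/
noncomputable def cantorF1 (x : ℝ) : ℝ := cfVal (fun j => coeff x (2*j))

/-- Second component of Cantor's bijection: `f₂([a_1,a_2,…]) = [a_2,a_4,a_6,…]`. -/
noncomputable def cantorF2 (x : ℝ) : ℝ := cfVal (fun j => coeff x (2*j+1))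

open Topology Set

/-! A rational `q ∈ [0,1]` is a finite continued fraction `[c₁, …, c_m]`. For fixed `d`, the
irrationals `x_k = [c₁, …, c_m, k, d, d, …]` tend to `q` as `k → ∞`, since `[c₁, …, c_m + t]`
is continuous in `t ≥ 0` and `[k, d, d, …] → 0`. The component of Cantor's bijection that reads
the coefficients of parity opposite to that of the position of `k` does not see `k`, so it is
constant along `(x_k)`, with a value that still remembers `d`. Taking `d = 1` and `d = 3` gives
two sequences tending to `q` along which that component of `g` has different limits. -/

theorem not_continuousWithinAt_of_tendsto_of_eq {ι X Y : Type*} [TopologicalSpace X]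
    [TopologicalSpace Y] [T2Space Y] {l : Filter ι} [l.NeBot] {f : X → Y} {s : Set X} {x : X}
    {u v : ι → X} {b c : Y} (hu : Tendsto u l (𝓝[s] x)) (hv : Tendsto v l (𝓝[s] x))
    (hfu : ∀ k, f (u k) = b) (hfv : ∀ k, f (v k) = c) (hbc : b ≠ c) :
    ¬ ContinuousWithinAt f s x := by
  intro hf
  have hb : Tendsto (fun _ => b) l (𝓝 (f x)) := (hf.tendsto.comp hu).congr hfu
  have hc : Tendsto (fun _ => c) l (𝓝 (f x)) := (hf.tendsto.comp hv).congr hfv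
  exact hbc ((tendsto_const_nhds_iff.mp hb).trans (tendsto_const_nhds_iff.mp hc).symm)

namespace Stream'

variable {α : Type*} (l : List α) (s : Stream' α)

theorem get_append_cons_of_ne (x y : α) {i : ℕ} (hi : i ≠ l.length) :
    (l ++ₛ x :: s).get i = (l ++ₛ y :: s).get i := by
  rcases hi.lt_or_gt with hi | hi
  · rw [get_append_left _ _ _ hi, get_append_left _ _ _ hi]
  · obtain ⟨n, rfl⟩ : ∃ n, i = l.length + (n + 1) := ⟨i - l.length - 1, by omega⟩
    rw [get_append_right, get_append_right, get_succ_cons, get_succ_cons]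

theorem get_append_cons_of_length_lt (x : α) {i : ℕ} (hi : l.length < i) :
    (l ++ₛ x :: s).get i = s.get (i - l.length - 1) := by
  obtain ⟨n, rfl⟩ : ∃ n, i = l.length + (n + 1) := ⟨i - l.length - 1, by omega⟩
  rw [get_append_right, get_succ_cons]
  congr 1
  omega

end Stream'

section Convergents

variable (a : ℕ → ℕ+)

noncomputable def convergent (n : ℕ) : ℝ := pnum a n / qden a n

theorem qden_pos (n : ℕ) : 0 < qden a n := by
  induction n using Nat.twoStepInduction with
  | zero => exact Nat.one_pos
  | one => exact (a 0).pos
  | more n _ ih => exact Nat.add_pos_left (Nat.mul_pos (a _).pos ih) _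

theorem qden_le_qden_succ : ∀ n, qden a n ≤ qden a (n + 1)
  | 0 => (a 0).pos
  | _ + 1 => Nat.le_add_right_of_le (Nat.le_mul_of_pos_left _ (a _).pos)

theorem two_pow_le_qden_mul_qden_succ (n : ℕ) : 2 ^ n ≤ qden a n * qden a (n + 1) := by
  induction n with
  | zero => simp only [qden, pow_zero, one_mul]; exact (a 0).pos
  | succ n ih =>
    have h2 : 2 * qden a n ≤ qden a (n + 2) := by
      have := qden_le_qden_succ a n
      have := Nat.le_mul_of_pos_left (qden a (n + 1)) (a (n + 1)).pos
      simp only [qden]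
      omega
    calc 2 ^ (n + 1) ≤ qden a (n + 1) * (2 * qden a n) := by rw [pow_succ]; nlinarith
      _ ≤ qden a (n + 1) * qden a (n + 2) := Nat.mul_le_mul_left _ h2

theorem pnum_succ_mul_qden_sub_pnum_mul_qden_succ (n : ℕ) :
    (pnum a (n + 1) * qden a n - pnum a n * qden a (n + 1) : ℤ) = (-1) ^ n := by
  induction n with
  | zero => simp [pnum, qden]
  | succ n ih =>
    simp only [pnum, qden, Nat.cast_add, Nat.cast_mul] at ih ⊢
    linear_combination -ih

theorem dist_convergent_succ_le (n : ℕ) :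
    dist (convergent a n) (convergent a (n + 1)) ≤ (1 / 2) ^ n := by
  have hq : (0 : ℝ) < qden a n := mod_cast qden_pos a n
  have hq' : (0 : ℝ) < qden a (n + 1) := mod_cast qden_pos a (n + 1)
  have hdet : ((pnum a (n + 1) : ℝ) * qden a n - pnum a n * qden a (n + 1)) = (-1) ^ n :=
    mod_cast pnum_succ_mul_qden_sub_pnum_mul_qden_succ a n
  have hpow : (2 : ℝ) ^ n ≤ qden a n * qden a (n + 1) :=
    mod_cast two_pow_le_qden_mul_qden_succ a n
  have hdiff : convergent a (n + 1) - convergent a n = (-1) ^ n / (qden a n * qden a (n + 1)) := by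
    rw [← hdet, convergent, convergent]
    field_simp
  rw [dist_comm, Real.dist_eq, hdiff, abs_div, abs_pow, abs_neg, abs_one, one_pow,
    abs_of_pos (by positivity), one_div_pow]
  exact one_div_le_one_div_of_le (by positivity) (by linarith)

theorem tendsto_convergent : Tendsto (convergent a) atTop (𝓝 (cfVal a)) :=
  tendsto_nhds_limUnder <| cauchySeq_tendsto_of_complete <|
    cauchySeq_of_le_geometric (1 / 2) 1 (by norm_num) (by simpa using dist_convergent_succ_le a)

theorem cfVal_nonneg : 0 ≤ cfVal a :=
  ge_of_tendsto' (tendsto_convergent a) fun n => by unfold convergent; positivity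

theorem pnum_succ_and_qden_succ (n : ℕ) :
    pnum a (n + 1) = qden (fun i => a (i + 1)) n ∧
      qden a (n + 1) = a 0 * qden (fun i => a (i + 1)) n + pnum (fun i => a (i + 1)) n := by
  induction n using Nat.twoStepInduction with
  | zero => simp [pnum, qden]
  | one => simp [pnum, qden, mul_comm]
  | more n ih₁ ih₂ =>
    rw [pnum.eq_3, qden.eq_3, qden.eq_3, pnum.eq_3 (fun i => a (i + 1)), ih₁.1, ih₂.1, ih₁.2,
      ih₂.2]
    exact ⟨rfl, by ring⟩

theorem convergent_succ (n : ℕ) :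
    convergent a (n + 1) = (a 0 + convergent (fun i => a (i + 1)) n)⁻¹ := by
  obtain ⟨hp, hq⟩ := pnum_succ_and_qden_succ a n
  have hq₀ : (0 : ℝ) < qden (fun i => a (i + 1)) n := mod_cast qden_pos _ n
  rw [convergent, convergent, hp, hq]
  push_cast
  field_simp

theorem cfVal_eq_inv : cfVal a = (a 0 + cfVal (fun i => a (i + 1)))⁻¹ := by
  have hpos : (0 : ℝ) < a 0 + cfVal (fun i => a (i + 1)) := by
    have := cfVal_nonneg (fun i => a (i + 1))
    have : (1 : ℝ) ≤ a 0 := mod_cast (a 0).pos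
    linarith
  refine tendsto_nhds_unique ((tendsto_convergent a).comp (tendsto_add_atTop_nat 1)) ?_
  simp only [Function.comp_def, convergent_succ]
  exact ((tendsto_convergent _).const_add _).inv₀ hpos.ne'

theorem cfVal_pos : 0 < cfVal a := by
  rw [cfVal_eq_inv]
  have := cfVal_nonneg (fun i => a (i + 1))
  positivity

theorem cfVal_lt_one : cfVal a < 1 := by
  have := cfVal_pos (fun i => a (i + 1))
  have : (1 : ℝ) ≤ a 0 := mod_cast (a 0).pos
  rw [cfVal_eq_inv, inv_lt_one₀ (by linarith)]
  linarith

theorem floor_inv_cfVal : ⌊(cfVal a)⁻¹⌋ = (a 0 : ℕ) := by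
  rw [cfVal_eq_inv, inv_inv, Int.floor_natCast_add,
    Int.floor_eq_zero_iff.mpr ⟨cfVal_nonneg _, cfVal_lt_one _⟩, add_zero]

theorem fract_inv_cfVal : Int.fract (cfVal a)⁻¹ = cfVal (fun i => a (i + 1)) := by
  rw [cfVal_eq_inv, inv_inv, Int.fract_natCast_add,
    Int.fract_eq_self.mpr ⟨cfVal_nonneg _, cfVal_lt_one _⟩]

end Convergents

theorem apply_eq_of_cfVal_eq (n : ℕ) {a b : ℕ → ℕ+} (h : cfVal a = cfVal b) : a n = b n := by
  induction n generalizing a b with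
  | zero =>
    have := floor_inv_cfVal a
    rw [h, floor_inv_cfVal] at this
    exact PNat.coe_injective (by exact_mod_cast this.symm)
  | succ n ih =>
    have := fract_inv_cfVal a
    rw [h, fract_inv_cfVal] at this
    exact ih this.symm

theorem cfVal_injective : Function.Injective cfVal := fun _ _ h =>
  funext fun n => apply_eq_of_cfVal_eq n h

theorem coeff_cfVal (a : ℕ → ℕ+) : coeff (cfVal a) = a := by
  have h : ∃ b, cfVal b = cfVal a := ⟨a, rfl⟩
  rw [coeff, dif_pos h]
  exact cfVal_injective h.choose_spec

theorem cfVal_irrational (a : ℕ → ℕ+) : Irrational (cfVal a) := by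
  rintro ⟨r, hr⟩
  induction hn : r.num.natAbs using Nat.strong_induction_on generalizing a r with
  | _ n ih =>
  have hr₀ : 0 < r := by exact_mod_cast hr ▸ cfVal_pos a
  have htail : ((Int.fract r⁻¹ : ℚ) : ℝ) = cfVal (fun i => a (i + 1)) := by
    rw [Rat.cast_fract, Rat.cast_inv, hr, fract_inv_cfVal]
  have hlt := Rat.fract_inv_num_lt_num_of_pos hr₀
  have hpos : 0 < (Int.fract r⁻¹).num :=
    Rat.num_pos.mpr (by exact_mod_cast htail ▸ cfVal_pos _)
  exact ih _ (by omega) _ _ htail rfl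

theorem cfVal_mem_Iirr (a : ℕ → ℕ+) : cfVal a ∈ Iirr :=
  ⟨⟨cfVal_nonneg a, (cfVal_lt_one a).le⟩, cfVal_irrational a⟩

noncomputable def cfWithTail : List ℕ+ → ℝ → ℝ
  | [], t => t
  | c :: cs, t => ((c : ℝ) + cfWithTail cs t)⁻¹

theorem cfWithTail_nonneg (cs : List ℕ+) {t : ℝ} (ht : 0 ≤ t) : 0 ≤ cfWithTail cs t := by
  induction cs with
  | nil => exact ht
  | cons c cs ih => rw [cfWithTail]; positivity

theorem continuousOn_cfWithTail (cs : List ℕ+) : ContinuousOn (cfWithTail cs) (Ici 0) := by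
  induction cs with
  | nil => exact continuousOn_id
  | cons c cs ih =>
    refine (continuousOn_const.add ih).inv₀ fun t ht => ?_
    exact (add_pos_of_pos_of_nonneg (by positivity) (cfWithTail_nonneg cs ht)).ne'

theorem cfVal_cons (c : ℕ+) (b : Stream' ℕ+) : cfVal (Stream'.cons c b) = (c + cfVal b)⁻¹ :=
  cfVal_eq_inv _

theorem cfVal_append (cs : List ℕ+) (b : Stream' ℕ+) :
    cfVal (cs ++ₛ b) = cfWithTail cs (cfVal b) := by
  induction cs with
  | nil => rfl
  | cons c cs ih => rw [Stream'.cons_append_stream, cfVal_cons, cfWithTail, ih]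

theorem exists_cfWithTail_eq (r : ℚ) (hr₀ : 0 ≤ r) (hr₁ : r ≤ 1) :
    ∃ cs, cfWithTail cs 0 = r := by
  induction hn : r.num.natAbs using Nat.strong_induction_on generalizing r with
  | _ n ih =>
  rcases hr₀.eq_or_lt with rfl | hr₀
  · exact ⟨[], by simp [cfWithTail]⟩
  have hinv : 1 ≤ r⁻¹ := one_le_inv₀ hr₀ |>.mpr hr₁
  have hfract := Rat.fract_inv_num_lt_num_of_pos hr₀
  have hfract₀ : 0 ≤ (Int.fract r⁻¹).num := Rat.num_nonneg.mpr (Int.fract_nonneg _)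
  obtain ⟨cs, hcs⟩ :=
    ih _ (by omega) (Int.fract r⁻¹) (Int.fract_nonneg _) (Int.fract_lt_one _).le rfl
  refine ⟨⌊r⁻¹⌋₊.toPNat (Nat.floor_pos.mpr hinv) :: cs, ?_⟩
  rw [cfWithTail, hcs, Nat.toPNat, PNat.mk_coe, ← Rat.cast_natCast, ← Rat.cast_add,
    natCast_floor_eq_intCast_floor (by positivity), Int.floor_add_fract, Rat.cast_inv, inv_inv]

theorem tendsto_cfVal_append_cons (cs : List ℕ+) (b : Stream' ℕ+) :
    Tendsto (fun k : ℕ => cfVal (cs ++ₛ Stream'.cons k.succPNat b)) atTop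
      (𝓝 (cfWithTail cs 0)) := by
  simp only [cfVal_append, cfVal_cons]
  refine ((continuousOn_cfWithTail cs).continuousWithinAt self_mem_Ici).tendsto.comp ?_
  refine (tendsto_inv_atTop_nhdsGT_zero.mono_right (nhdsWithin_mono _ Ioi_subset_Ici_self)).comp ?_
  refine tendsto_atTop_mono (fun k => ?_) tendsto_natCast_atTop_atTop
  have := cfVal_nonneg b
  simp only [Nat.succPNat_coe, Nat.cast_succ]
  linarith

theorem not_continuousWithinAt_cfWithTail_of_cfVal_comp {h : ℝ → ℝ} {φ : ℕ → ℕ}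
    (hh : ∀ a, h (cfVal a) = cfVal (fun j => a (φ j))) (cs : List ℕ+)
    (hφ : ∀ j, φ j ≠ cs.length) (hφ' : ∃ j, cs.length < φ j) :
    ¬ ContinuousWithinAt h (Icc 0 1) (cfWithTail cs 0) := by
  let x (d : ℕ+) (k : ℕ) : Stream' ℕ+ := cs ++ₛ Stream'.cons k.succPNat (Stream'.const d)
  have hx (d : ℕ+) : Tendsto (fun k => cfVal (x d k)) atTop (𝓝[Icc 0 1] (cfWithTail cs 0)) :=
    tendsto_nhdsWithin_iff.mpr ⟨tendsto_cfVal_append_cons _ _,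
      .of_forall fun k => (cfVal_mem_Iirr (x d k)).1⟩
  have hhx (d : ℕ+) (k : ℕ) : h (cfVal (x d k)) = cfVal (fun j => (x d 0).get (φ j)) :=
    (hh (x d k)).trans <| congrArg cfVal <| funext fun j =>
      Stream'.get_append_cons_of_ne _ _ _ _ (hφ j)
  obtain ⟨j, hj⟩ := hφ'
  have h13 : cfVal (fun j => (x 1 0).get (φ j)) ≠ cfVal (fun j => (x 3 0).get (φ j)) := by
    intro heq
    have := apply_eq_of_cfVal_eq j heq
    simp only [x, Stream'.get_append_cons_of_length_lt _ _ _ hj, Stream'.get_const] at this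
    exact absurd this (by decide)
  exact not_continuousWithinAt_of_tendsto_of_eq (hx 1) (hx 3) (hhx 1) (hhx 3) h13

theorem extension_of_cantor_discontinuous_at_rationals_general
    (g : ℝ → ℝ × ℝ)
    (hg : ∀ x ∈ Iirr, g x = (cantorF1 x, cantorF2 x)) :
    ∀ q ∈ Set.Icc (0:ℝ) 1, ¬ Irrational q →
      ¬ ContinuousWithinAt g (Set.Icc (0:ℝ) 1) q := by
  rintro q ⟨hq₀, hq₁⟩ hq hcont
  obtain ⟨r, rfl⟩ := not_not.mp hq
  obtain ⟨cs, hcs⟩ := exists_cfWithTail_eq r (by exact_mod_cast hq₀) (by exact_mod_cast hq₁)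
  rw [← hcs] at hcont
  rcases Nat.even_or_odd cs.length with ⟨m, hm⟩ | ⟨m, hm⟩
  · refine not_continuousWithinAt_cfWithTail_of_cfVal_comp (h := fun x => (g x).2)
      (φ := fun j => 2 * j + 1) (fun a => ?_) cs (fun j => by omega) ⟨cs.length, by omega⟩
      hcont.snd
    rw [hg _ (cfVal_mem_Iirr a), cantorF2, coeff_cfVal]
  · refine not_continuousWithinAt_cfWithTail_of_cfVal_comp (h := fun x => (g x).1)
      (φ := fun j => 2 * j) (fun a => ?_) cs (fun j => by omega) ⟨cs.length, by omega⟩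
      hcont.fst
    rw [hg _ (cfVal_mem_Iirr a), cantorF1, coeff_cfVal]

/-- Any extension to `[0,1]` of Cantor's bijection `f = (f₁,f₂) : I → I²` is
discontinuous at every rational number of `[0,1]`. -/
theorem extension_of_cantor_discontinuous_at_rationals
    (g : ℝ → ℝ × ℝ)
    (hmap : ∀ x ∈ Set.Icc (0:ℝ) 1, g x ∈ Set.Icc (0:ℝ) 1 ×ˢ Set.Icc (0:ℝ) 1)
    (hg : ∀ x ∈ Iirr, g x = (cantorF1 x, cantorF2 x)) :
    ∀ q ∈ Set.Icc (0:ℝ) 1, ¬ Irrational q →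
      ¬ ContinuousWithinAt g (Set.Icc (0:ℝ) 1) q :=
  extension_of_cantor_discontinuous_at_rationals_general g hg
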